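/- arXiv:2602.17587 — 5 statements merged into one kernel-verified Lean document; each statement's English description precedes it below -/
import Mathlib

section
/- Let a ≥ 1 and b ≥ 2a be real numbers. If a real number x > 0 satisfies x ≤ a·log(x) + b, then x ≤ b + 2a·log(b). -/
theorem stmt0 (a b x : ℝ) (ha : 1 ≤ a) (hb : 2 * a ≤ b) (hx : 0 < x)
    (h : x ≤ a * Real.log x + b) :
    x ≤ b + 2 * a * Real.log b := by
  by_contra hcon
  push_neg at hcon
  set M := b + 2 * a * Real.log b with hM
  have ha0 : (0:ℝ) < a := by linarith
  have hb2 : (2:ℝ) ≤ b := by linarith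
  have hb0 : (0:ℝ) < b := by linarith
  have hlogb : 0 ≤ Real.log b := Real.log_nonneg (by linarith)
  have hMb : b ≤ M := by nlinarith
  have hM0 : 0 < M := by linarith
  have haM : a < M := by linarith
  have hMb2 : M ≤ b ^ 2 := by
    have h1 : Real.log b ≤ b - 1 := Real.log_le_sub_one_of_pos hb0
    nlinarith
  have hlogM : Real.log M ≤ 2 * Real.log b := by
    calc Real.log M ≤ Real.log (b ^ 2) := Real.log_le_log hM0 hMb2
      _ = 2 * Real.log b := by
        rw [Real.log_pow]; push_cast; ring
  have hxM : 0 < x / M := div_pos hx hM0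
  have hlogdiv : Real.log (x / M) ≤ x / M - 1 := Real.log_le_sub_one_of_pos hxM
  have hsplit : Real.log x - Real.log M = Real.log (x / M) := by
    rw [Real.log_div (ne_of_gt hx) (ne_of_gt hM0)]
  have hkey : a * (Real.log x - Real.log M) < x - M := by
    rw [hsplit]
    have h2 : a * Real.log (x / M) ≤ a * (x / M - 1) := by
      apply mul_le_mul_of_nonneg_left hlogdiv (le_of_lt ha0)
    have h3 : a * (x / M - 1) < x - M := by
      rw [div_sub_one (ne_of_gt hM0), ← mul_div_assoc, div_lt_iff₀ hM0]
      nlinarith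
    linarith
  nlinarith
end

section
/- Wald's lemma for Markov chains: Let (X_n)_{n≥0} be an irreducible, aperiodic Markov chain on a finite state space [m] with transition matrix P and stationary distribution π, let f : [m] → ℝ, and let ω solve the Poisson equation (I−P)ω = f − (π f)·𝟏. Then the process U_0 = ω(X_0), U_n = ω(X_n) + ∑_{k=0}^{n−1}(f(X_k) − π f) for n ≥ 1, is a martingale with respect to the natural filtration, and if N is a stopping time with E[N] < ∞ then E[∑_{k=0}^{N−1} f(X_k)] = (π f)·E[N] + E[ω(X_0) − ω(X_N)]. -/
/-!
Write `U n = w (X n) + ∑_{k<n} (f (X k) - π f)`. The Poisson equation and the Markov property give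
`E[w (X (n+1)) | ℱ n] = w (X n) - (f (X n) - π f)`, which is exactly the martingale property of `U`.
On a finite state space `U` has bounded increments, so `|U (N ∧ n)| ≤ |U 0| + b N`; since `N` is
integrable, dominated convergence upgrades optional stopping at the bounded times `N ∧ n` to
`E[U N] = E[U 0]`, and this rearranges to the identity.
-/

open MeasureTheory Filter Topology Finset

namespace MeasureTheory

variable {Ω E : Type*} {m0 : MeasurableSpace Ω} {μ : Measure Ω} {ℱ : Filtration ℕ m0}

theorem measurable_apply_index {β : Type*} [MeasurableSpace β] {U : ℕ → Ω → β}
    (hU : ∀ n, Measurable (U n)) {T : Ω → ℕ} (hT : Measurable T) :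
    Measurable fun ω => U (T ω) ω :=
  (measurable_from_prod_countable_left (f := fun p : Ω × ℕ => U p.2 p.1) hU).comp
    (measurable_id.prodMk hT)

theorem IsStoppingTime.measurable_nat {N : Ω → ℕ}
    (hN : IsStoppingTime ℱ fun ω => (N ω : WithTop ℕ)) : Measurable N :=
  (measurable_of_countable (WithTop.untopD 0)).comp hN.measurable'

theorem abs_sub_zero_le_of_abs_succ_sub_le {u : ℕ → ℝ} {b : ℝ}
    (h : ∀ n, |u (n + 1) - u n| ≤ b) (n : ℕ) : |u n - u 0| ≤ n * b := by
  induction n with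
  | zero => simp
  | succ n ih =>
    calc |u (n + 1) - u 0| ≤ |u (n + 1) - u n| + |u n - u 0| := abs_sub_le _ _ _
      _ ≤ (n + 1 : ℕ) * b := by push_cast; linarith [h n]

theorem martingale_add_sum_range_of_condExp_succ [NormedAddCommGroup E] [NormedSpace ℝ E]
    [CompleteSpace E] [IsFiniteMeasure μ] {Y Z : ℕ → Ω → E}
    (hY : StronglyAdapted ℱ Y) (hZ : StronglyAdapted ℱ Z)
    (hY_int : ∀ n, Integrable (Y n) μ) (hZ_int : ∀ n, Integrable (Z n) μ)
    (hcond : ∀ n, μ[Y (n + 1) | ℱ n] =ᵐ[μ] Y n - Z n) :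
    Martingale (fun n ω => Y n ω + ∑ k ∈ range n, Z k ω) ℱ μ := by
  have hsum_meas {n j : ℕ} (hnj : n ≤ j + 1) :
      StronglyMeasurable[ℱ j] fun ω => ∑ k ∈ range n, Z k ω :=
    Finset.stronglyMeasurable_fun_sum _ fun k hk =>
      (hZ k).mono (ℱ.mono (Nat.lt_succ_iff.1 ((mem_range.1 hk).trans_le hnj)))
  have hsum_int (n : ℕ) : Integrable (fun ω => ∑ k ∈ range n, Z k ω) μ :=
    integrable_finsetSum _ fun k _ => hZ_int k
  refine martingale_nat (fun n => (hY n).add (hsum_meas n.le_succ))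
    (fun n => (hY_int n).add (hsum_int n)) fun n => ?_
  have hadd : μ[fun ω => Y (n + 1) ω + ∑ k ∈ range (n + 1), Z k ω | ℱ n] =ᵐ[μ]
      μ[Y (n + 1) | ℱ n] + μ[fun ω => ∑ k ∈ range (n + 1), Z k ω | ℱ n] :=
    condExp_add (hY_int (n + 1)) (hsum_int (n + 1)) (ℱ n)
  rw [condExp_of_stronglyMeasurable (ℱ.le n) (hsum_meas le_rfl) (hsum_int _)] at hadd
  filter_upwards [hadd, hcond n] with ω hadd hY'
  rw [hadd, Pi.add_apply, hY', Pi.sub_apply, sum_range_succ]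
  abel

theorem Martingale.integral_apply_index_of_le_const [IsFiniteMeasure μ] [NormedAddCommGroup E]
    [NormedSpace ℝ E] [CompleteSpace E] {U : ℕ → Ω → E} (hU : Martingale U ℱ μ) {T : Ω → ℕ}
    (hT : IsStoppingTime ℱ fun ω => (T ω : WithTop ℕ)) {n : ℕ} (hTn : ∀ ω, T ω ≤ n) :
    ∫ ω, U (T ω) ω ∂μ = ∫ ω, U 0 ω ∂μ := by
  have hstop := hU.stoppedValue_ae_eq_condExp_of_le_const hT (n := n)
    (fun ω => WithTop.coe_le_coe.2 (hTn ω))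
  calc ∫ ω, U (T ω) ω ∂μ = ∫ ω, μ[U n | hT.measurableSpace] ω ∂μ := integral_congr_ae hstop
    _ = ∫ ω, U n ω ∂μ := integral_condExp _
    _ = ∫ ω, U 0 ω ∂μ := by
      simpa using (hU.setIntegral_eq n.zero_le MeasurableSet.univ).symm

theorem Martingale.integral_apply_index_of_abs_succ_sub_le [IsFiniteMeasure μ]
    {U : ℕ → Ω → ℝ} {b : ℝ} (hU : Martingale U ℱ μ)
    (hinc : ∀ n ω, |U (n + 1) ω - U n ω| ≤ b) {N : Ω → ℕ}
    (hN : IsStoppingTime ℱ fun ω => (N ω : WithTop ℕ))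
    (hN_int : Integrable (fun ω => (N ω : ℝ)) μ) :
    ∫ ω, U (N ω) ω ∂μ = ∫ ω, U 0 ω ∂μ := by
  have hU_meas (n : ℕ) : Measurable (U n) :=
    ((hU.stronglyAdapted n).mono (ℱ.le n)).measurable
  have hN_meas := hN.measurable_nat
  have hstopped (n : ℕ) : ∫ ω, U (min (N ω) n) ω ∂μ = ∫ ω, U 0 ω ∂μ :=
    hU.integral_apply_index_of_le_const (hN.min_const n) fun ω => min_le_right _ _
  have hlim : Tendsto (fun n => ∫ ω, U (min (N ω) n) ω ∂μ) atTop (𝓝 (∫ ω, U (N ω) ω ∂μ)) := by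
    refine tendsto_integral_of_dominated_convergence (fun ω => |U 0 ω| + N ω * b)
      (fun n => (measurable_apply_index hU_meas (hN_meas.min measurable_const)).aestronglyMeasurable)
      ((hU.integrable 0).abs.add (hN_int.mul_const b)) (fun n => ae_of_all _ fun ω => ?_)
      (ae_of_all _ fun ω => tendsto_const_nhds.congr' ?_)
    · have hb : 0 ≤ b := (abs_nonneg _).trans (hinc 0 ω)
      have := abs_sub_zero_le_of_abs_succ_sub_le (u := fun n => U n ω) (fun n => hinc n ω)
        (min (N ω) n)
      have hmin : ((min (N ω) n : ℕ) : ℝ) ≤ N ω := Nat.cast_le.2 (min_le_left _ _)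
      rw [Real.norm_eq_abs]
      nlinarith [abs_sub_abs_le_abs_sub (U (min (N ω) n) ω) (U 0 ω)]
    · filter_upwards [eventually_ge_atTop (N ω)] with n hn
      rw [min_eq_left hn]
  rw [funext hstopped, tendsto_const_nhds_iff] at hlim
  exact hlim.symm

section FiniteStateSpace

variable {S : Type*} [Fintype S] [MeasurableSpace S] [MeasurableSingletonClass S]
  {X : ℕ → Ω → S}

theorem integrable_comp_apply_index [IsFiniteMeasure μ] (hX : ∀ n, Measurable (X n))
    (h : S → ℝ) {T : Ω → ℕ} (hT : Measurable T) :
    Integrable (fun ω => h (X (T ω) ω)) μ :=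
  .of_bound (measurable_apply_index (fun n => (measurable_of_finite h).comp (hX n))
    hT).aestronglyMeasurable ‖h‖ (ae_of_all _ fun ω => norm_le_pi_norm h (X (T ω) ω))

theorem integrable_sum_range_comp_apply_index (hX : ∀ n, Measurable (X n)) (h : S → ℝ)
    {T : Ω → ℕ} (hT : Measurable T) (hT_int : Integrable (fun ω => (T ω : ℝ)) μ) :
    Integrable (fun ω => ∑ k ∈ range (T ω), h (X k ω)) μ := by
  have hmeas : Measurable fun ω => ∑ k ∈ range (T ω), h (X k ω) :=
    measurable_apply_index (U := fun n ω => ∑ k ∈ range n, h (X k ω))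
      (fun n => Finset.measurable_fun_sum _ fun k _ => (measurable_of_finite h).comp (hX k)) hT
  refine (hT_int.mul_const ‖h‖).mono' hmeas.aestronglyMeasurable (ae_of_all _ fun ω => ?_)
  calc ‖∑ k ∈ range (T ω), h (X k ω)‖ ≤ ∑ k ∈ range (T ω), ‖h (X k ω)‖ := norm_sum_le _ _
    _ ≤ ∑ k ∈ range (T ω), ‖h‖ := sum_le_sum fun k _ => norm_le_pi_norm h _
    _ = T ω * ‖h‖ := by rw [sum_const, card_range, nsmul_eq_mul]

variable [IsFiniteMeasure μ] {w g : S → ℝ}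

theorem martingale_comp_add_sum_range_comp (hX : Adapted ℱ X)
    (hcond : ∀ n, μ[fun ω => w (X (n + 1) ω) | ℱ n] =ᵐ[μ] fun ω => w (X n ω) - g (X n ω)) :
    Martingale (fun n ω => w (X n ω) + ∑ k ∈ range n, g (X k ω)) ℱ μ := by
  have hX_meas (n : ℕ) : Measurable (X n) := (hX n).mono (ℱ.le n) le_rfl
  have hcomp_adapted (h : S → ℝ) : StronglyAdapted ℱ fun n ω => h (X n ω) :=
    fun n => ((measurable_of_finite h).comp (hX n)).stronglyMeasurable
  exact martingale_add_sum_range_of_condExp_succ (hcomp_adapted w) (hcomp_adapted g)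
    (fun n => integrable_comp_apply_index hX_meas w measurable_const)
    (fun n => integrable_comp_apply_index hX_meas g measurable_const) hcond

theorem integral_sum_range_comp_eq_integral_sub (hX : Adapted ℱ X)
    (hcond : ∀ n, μ[fun ω => w (X (n + 1) ω) | ℱ n] =ᵐ[μ] fun ω => w (X n ω) - g (X n ω))
    {N : Ω → ℕ} (hN : IsStoppingTime ℱ fun ω => (N ω : WithTop ℕ))
    (hN_int : Integrable (fun ω => (N ω : ℝ)) μ) :
    ∫ ω, ∑ k ∈ range (N ω), g (X k ω) ∂μ = ∫ ω, (w (X 0 ω) - w (X (N ω) ω)) ∂μ := by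
  set U : ℕ → Ω → ℝ := fun n ω => w (X n ω) + ∑ k ∈ range n, g (X k ω) with hU
  have hX_meas (n : ℕ) : Measurable (X n) := (hX n).mono (ℱ.le n) le_rfl
  have hN_meas := hN.measurable_nat
  have hinc (n : ℕ) (ω : Ω) : |U (n + 1) ω - U n ω| ≤ 2 * ‖w‖ + ‖g‖ := by
    have h : U (n + 1) ω - U n ω = w (X (n + 1) ω) - w (X n ω) + g (X n ω) := by
      simp only [hU, sum_range_succ]
      ring
    rw [h]
    refine (abs_add_le _ _).trans ((add_le_add_left (abs_sub _ _) _).trans ?_)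
    simp only [← Real.norm_eq_abs]
    linarith [norm_le_pi_norm w (X (n + 1) ω), norm_le_pi_norm w (X n ω),
      norm_le_pi_norm g (X n ω)]
  have hw_int (T : Ω → ℕ) (hT : Measurable T) := integrable_comp_apply_index (μ := μ) hX_meas w hT
  have hUN_int : Integrable (fun ω => U (N ω) ω) μ :=
    (hw_int N hN_meas).add (integrable_sum_range_comp_apply_index hX_meas g hN_meas hN_int)
  have hw0_int : Integrable (fun ω => w (X 0 ω)) μ := hw_int _ measurable_const
  have hU0_int : Integrable (U 0) μ := by simpa [hU] using hw0_int
  have hdecomp (ω : Ω) : ∑ k ∈ range (N ω), g (X k ω) =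
      (U (N ω) ω - U 0 ω) + (w (X 0 ω) - w (X (N ω) ω)) := by
    simp only [hU, sum_range_zero]
    ring
  have hdiff_int : Integrable (fun ω => U (N ω) ω - U 0 ω) μ := hUN_int.sub hU0_int
  have hw_diff_int : Integrable (fun ω => w (X 0 ω) - w (X (N ω) ω)) μ :=
    hw0_int.sub (hw_int N hN_meas)
  rw [integral_congr_ae (ae_of_all _ hdecomp), integral_add hdiff_int hw_diff_int,
    integral_sub hUN_int hU0_int,
    (martingale_comp_add_sum_range_comp hX hcond).integral_apply_index_of_abs_succ_sub_le hinc hN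
      hN_int, sub_self, zero_add]

end FiniteStateSpace

end MeasureTheory

theorem stmt10_general (m : ℕ)
    (P : Matrix (Fin m) (Fin m) ℝ)
    (π : Fin m → ℝ)
    (f w : Fin m → ℝ)
    (hpoisson : ((1 : Matrix (Fin m) (Fin m) ℝ) - P).mulVec w =
      fun i => f i - ∑ j, π j * f j)
    {Ω : Type*} [m0 : MeasurableSpace Ω] (μ : Measure Ω) [IsProbabilityMeasure μ]
    (X : ℕ → Ω → Fin m)
    (ℱ : Filtration ℕ m0)
    (hadapted : ∀ n, Measurable[ℱ n] (X n))
    (hmarkov : ∀ (n : ℕ) (g : Fin m → ℝ),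
      μ[(fun ω => g (X (n + 1) ω)) | ℱ n] =ᵐ[μ]
        fun ω => ∑ j, P (X n ω) j * g j) :
    Martingale (fun n ω => w (X n ω) +
        ∑ k ∈ Finset.range n, (f (X k ω) - ∑ j, π j * f j)) ℱ μ ∧
    ∀ N : Ω → ℕ, IsStoppingTime ℱ (fun ω => (N ω : WithTop ℕ)) →
      Integrable (fun ω => (N ω : ℝ)) μ →
      ∫ ω, (∑ k ∈ Finset.range (N ω), f (X k ω)) ∂μ =
        (∑ j, π j * f j) * (∫ ω, (N ω : ℝ) ∂μ) +
        ∫ ω, (w (X 0 ω) - w (X (N ω) ω)) ∂μ := by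
  set c := ∑ j, π j * f j
  set g : Fin m → ℝ := fun i => f i - c with hg
  have hPw (i : Fin m) : ∑ j, P i j * w j = w i - g i := by
    have h := congrFun hpoisson i
    rw [Matrix.sub_mulVec, Matrix.one_mulVec, Pi.sub_apply] at h
    change w i - ∑ j, P i j * w j = g i at h
    linarith
  have hcond (n : ℕ) : μ[fun ω => w (X (n + 1) ω) | ℱ n] =ᵐ[μ]
      fun ω => w (X n ω) - g (X n ω) :=
    (hmarkov n w).trans (ae_of_all _ fun ω => hPw (X n ω))
  refine ⟨martingale_comp_add_sum_range_comp hadapted hcond, fun N hN hN_int => ?_⟩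
  have hsplit (ω : Ω) : ∑ k ∈ Finset.range (N ω), f (X k ω) =
      ∑ k ∈ Finset.range (N ω), g (X k ω) + N ω * c := by
    rw [hg, Finset.sum_sub_distrib, Finset.sum_const, Finset.card_range, nsmul_eq_mul]
    ring
  have hX_meas (n : ℕ) : Measurable (X n) := (hadapted n).mono (ℱ.le n) le_rfl
  rw [integral_congr_ae (ae_of_all _ hsplit),
    integral_add (integrable_sum_range_comp_apply_index hX_meas g hN.measurable_nat hN_int)
      (hN_int.mul_const c),
    integral_sum_range_comp_eq_integral_sub hadapted hcond hN hN_int, integral_mul_const]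
  ring

theorem stmt10 (m : ℕ) (hm : 0 < m)
    (P : Matrix (Fin m) (Fin m) ℝ)
    (hP0 : ∀ i j, 0 ≤ P i j) (hP1 : ∀ i, ∑ j, P i j = 1)
    (herg : ∃ n : ℕ, ∀ i j, 0 < (P ^ n) i j)
    (π : Fin m → ℝ) (hπ0 : ∀ i, 0 ≤ π i) (hπ1 : ∑ i, π i = 1)
    (hstat : ∀ j, ∑ i, π i * P i j = π j)
    (f w : Fin m → ℝ)
    (hpoisson : ((1 : Matrix (Fin m) (Fin m) ℝ) - P).mulVec w =
      fun i => f i - ∑ j, π j * f j)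
    {Ω : Type*} [m0 : MeasurableSpace Ω] (μ : Measure Ω) [IsProbabilityMeasure μ]
    (X : ℕ → Ω → Fin m)
    (ℱ : Filtration ℕ m0)
    (hadapted : ∀ n, Measurable[ℱ n] (X n))
    (hmarkov : ∀ (n : ℕ) (g : Fin m → ℝ),
      μ[(fun ω => g (X (n + 1) ω)) | ℱ n] =ᵐ[μ]
        fun ω => ∑ j, P (X n ω) j * g j) :
    Martingale (fun n ω => w (X n ω) +
        ∑ k ∈ Finset.range n, (f (X k ω) - ∑ j, π j * f j)) ℱ μ ∧
    ∀ N : Ω → ℕ, IsStoppingTime ℱ (fun ω => (N ω : WithTop ℕ)) →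
      Integrable (fun ω => (N ω : ℝ)) μ →
      ∫ ω, (∑ k ∈ Finset.range (N ω), f (X k ω)) ∂μ =
        (∑ j, π j * f j) * (∫ ω, (N ω : ℝ) ∂μ) +
        ∫ ω, (w (X 0 ω) - w (X (N ω) ω)) ∂μ :=
  stmt10_general m P π f w hpoisson (m0 := m0) μ X ℱ hadapted hmarkov
end

section
/- Pinsker-type inequality for Markov divergences: Let P, Q be m×m ergodic transition matrices with stationary distributions π_P, π_Q respectively, and let g : [m] → ℝ be non-constant. Let ω be any solution of the Poisson equation (I−P)ω = g − (π_P g)·𝟏. Then ∑ᵢ π_Q(i)·KL(Q(i,·) ‖ P(i,·)) ≥ (E_{π_Q}[g] − E_{π_P}[g])² / (2‖ω‖_∞²). -/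
/-!
The Poisson equation and the stationarity of `πQ` turn the difference of the two means into
`∑ᵢ πQ(i) ⟨Q(i,·) - P(i,·), ω⟩`, so each row contributes at most `‖ω‖_∞ ‖Q(i,·) - P(i,·)‖₁`.
Jensen's inequality for the average over `πQ`, followed by Pinsker's inequality
`‖q - p‖₁² ≤ 2 KL(q ‖ p)` row by row, gives the bound. Pinsker's inequality itself is
Cauchy–Schwarz with weights `(q + 2p)/3` applied to the pointwise estimate
`3 (x - 1)² ≤ 2 (x + 2) (x log x - x + 1)`.
-/

open scoped ENNReal

/-- KL divergence between two finitely supported distributions, `+∞` if `q` is not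
absolutely continuous w.r.t. `p`. -/
noncomputable def klDiv {m : ℕ} (q p : Fin m → ℝ) : ℝ≥0∞ :=
  if ∀ j, p j = 0 → q j = 0 then
    ENNReal.ofReal (∑ j, q j * Real.log (q j / p j)) else ⊤

open Real Matrix Set
open InformationTheory (klFun klFun_apply klFun_one klFun_nonneg continuous_klFun
  hasDerivAt_klFun)

lemma monotoneOn_add_one_mul_log_sub :
    MonotoneOn (fun x => (x + 1) * log x - 2 * (x - 1)) (Ioi 0) := by
  have hderiv : ∀ x ∈ Ioi (0 : ℝ),
      HasDerivAt (fun x => (x + 1) * log x - 2 * (x - 1)) (log x - (1 - x⁻¹)) x := by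
    intro x hx
    have hx0 : x ≠ 0 := ne_of_gt hx
    refine ((((hasDerivAt_id' x).add_const 1).mul (hasDerivAt_log hx0)).sub
      (((hasDerivAt_id' x).sub_const 1).const_mul 2)).congr_deriv ?_
    field_simp
    ring
  refine monotoneOn_of_hasDerivWithinAt_nonneg (convex_Ioi 0) (f' := fun x => log x - (1 - x⁻¹))
    (fun x hx => (hderiv x hx).continuousAt.continuousWithinAt) (fun x hx => ?_) (fun x hx => ?_)
  · rw [interior_Ioi] at hx ⊢
    exact (hderiv x hx).hasDerivWithinAt
  · rw [interior_Ioi] at hx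
    exact sub_nonneg.2 (one_sub_inv_le_log_of_pos hx)

lemma three_mul_sq_sub_one_le_klFun {x : ℝ} (hx : 0 ≤ x) :
    3 * (x - 1) ^ 2 ≤ 2 * (x + 2) * klFun x := by
  set h : ℝ → ℝ := fun x => 2 * (x + 2) * klFun x - 3 * (x - 1) ^ 2
  have hcont : Continuous h := by fun_prop
  have hderiv : ∀ y ∈ Ioi (0 : ℝ),
      HasDerivAt h (4 * ((y + 1) * log y - 2 * (y - 1))) y := by
    intro y hy
    refine ((((hasDerivAt_id' y).add_const 2).const_mul 2).mul
      (hasDerivAt_klFun (ne_of_gt hy))).sub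
      ((((hasDerivAt_id' y).sub_const 1).pow 2).const_mul 3) |>.congr_deriv ?_
    rw [klFun_apply]
    ring
  -- `h' = 4 k` for the monotone `k` above, which vanishes at `1`; so `h` is minimal at `1`.
  have hk := monotoneOn_add_one_mul_log_sub
  suffices h 1 ≤ h x by simpa [h, klFun_one] using this
  rcases le_total x 1 with hx1 | hx1
  · refine antitoneOn_of_hasDerivWithinAt_nonpos (convex_Icc 0 1) hcont.continuousOn
      (f' := fun y => 4 * ((y + 1) * log y - 2 * (y - 1)))
      (fun y hy => ?_) (fun y hy => ?_) ⟨hx, hx1⟩ ⟨zero_le_one, le_rfl⟩ hx1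
    · rw [interior_Icc] at hy ⊢
      exact (hderiv y hy.1).hasDerivWithinAt
    · rw [interior_Icc] at hy
      have := hk hy.1 (mem_Ioi.2 one_pos) hy.2.le
      simp only [log_one] at this
      linarith
  · refine monotoneOn_of_hasDerivWithinAt_nonneg (convex_Ici 1) hcont.continuousOn
      (f' := fun y => 4 * ((y + 1) * log y - 2 * (y - 1)))
      (fun y hy => ?_) (fun y hy => ?_) self_mem_Ici hx1 hx1
    · rw [interior_Ici] at hy ⊢
      exact (hderiv y (mem_Ioi.2 (one_pos.trans hy))).hasDerivWithinAt
    · rw [interior_Ici] at hy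
      have := hk (mem_Ioi.2 one_pos) (mem_Ioi.2 (one_pos.trans hy)) hy.le
      simp only [log_one] at this
      linarith

lemma mul_log_div_sub_add_eq_mul_klFun {p : ℝ} (q : ℝ) (hp : 0 < p) :
    q * log (q / p) - q + p = p * klFun (q / p) := by
  rw [klFun_apply]
  field_simp
  ring

lemma mul_log_div_sub_add_nonneg {p q : ℝ} (hp : 0 ≤ p) (hq : 0 ≤ q) (hpq : p = 0 → q = 0) :
    0 ≤ q * log (q / p) - q + p := by
  rcases hp.eq_or_lt with rfl | hp
  · simp [hpq rfl]
  · rw [mul_log_div_sub_add_eq_mul_klFun q hp]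
    exact mul_nonneg hp.le (klFun_nonneg (div_nonneg hq hp.le))

lemma three_mul_sq_sub_le_mul_log_div {p q : ℝ} (hp : 0 ≤ p) (hq : 0 ≤ q) (hpq : p = 0 → q = 0) :
    3 * (q - p) ^ 2 ≤ 2 * (q + 2 * p) * (q * log (q / p) - q + p) := by
  rcases hp.eq_or_lt with rfl | hp
  · simp [hpq rfl]
  · have key := mul_le_mul_of_nonneg_left (three_mul_sq_sub_one_le_klFun (div_nonneg hq hp.le))
      (sq_nonneg p)
    rw [mul_log_div_sub_add_eq_mul_klFun q hp]
    calc 3 * (q - p) ^ 2 = p ^ 2 * (3 * (q / p - 1) ^ 2) := by field_simp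
      _ ≤ p ^ 2 * (2 * (q / p + 2) * klFun (q / p)) := key
      _ = 2 * (q + 2 * p) * (p * klFun (q / p)) := by field_simp

theorem sq_sum_abs_sub_le_two_mul_sum_mul_log {ι : Type*} [Fintype ι] {p q : ι → ℝ}
    (hp0 : ∀ i, 0 ≤ p i) (hq0 : ∀ i, 0 ≤ q i) (hp1 : ∑ i, p i = 1) (hq1 : ∑ i, q i = 1)
    (hpq : ∀ i, p i = 0 → q i = 0) :
    (∑ i, |q i - p i|) ^ 2 ≤ 2 * ∑ i, q i * log (q i / p i) := by
  have hcs := Finset.sum_sq_le_sum_mul_sum_of_sq_le_mul Finset.univ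
    (r := fun i => |q i - p i|) (f := fun i => (q i + 2 * p i) / 3)
    (g := fun i => 2 * (q i * log (q i / p i) - q i + p i))
    (fun i _ => by linarith [hp0 i, hq0 i])
    (fun i _ => by linarith [mul_log_div_sub_add_nonneg (hp0 i) (hq0 i) (hpq i)])
    (fun i _ => by
      linarith [sq_abs (q i - p i), three_mul_sq_sub_le_mul_log_div (hp0 i) (hq0 i) (hpq i)])
  have hf : ∑ i, (q i + 2 * p i) / 3 = 1 := by
    rw [← Finset.sum_div, Finset.sum_add_distrib, ← Finset.mul_sum, hq1, hp1]; norm_num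
  have hg : ∑ i, 2 * (q i * log (q i / p i) - q i + p i) = 2 * ∑ i, q i * log (q i / p i) := by
    rw [← Finset.mul_sum, Finset.sum_add_distrib, Finset.sum_sub_distrib, hq1, hp1]; ring
  rwa [hf, hg, one_mul] at hcs

lemma ofReal_sq_sum_abs_sub_div_two_le_klDiv {m : ℕ} {p q : Fin m → ℝ}
    (hp0 : ∀ i, 0 ≤ p i) (hq0 : ∀ i, 0 ≤ q i) (hp1 : ∑ i, p i = 1) (hq1 : ∑ i, q i = 1) :
    ENNReal.ofReal ((∑ i, |q i - p i|) ^ 2 / 2) ≤ klDiv q p := by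
  unfold klDiv
  split_ifs with hpq
  · refine ENNReal.ofReal_le_ofReal ?_
    linarith [sq_sum_abs_sub_le_two_mul_sum_mul_log hp0 hq0 hp1 hq1 hpq]
  · exact le_top

lemma abs_dotProduct_le_sum_abs_mul_norm {ι : Type*} [Fintype ι] (v w : ι → ℝ) :
    |v ⬝ᵥ w| ≤ (∑ i, |v i|) * ‖w‖ := by
  rw [Finset.sum_mul]
  refine (Finset.abs_sum_le_sum_abs _ _).trans (Finset.sum_le_sum fun i _ => ?_)
  rw [abs_mul]
  exact mul_le_mul_of_nonneg_left (norm_le_pi_norm w i) (abs_nonneg _)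

lemma dotProduct_sub_eq_dotProduct_mulVec_of_poisson {ι R : Type*} [Fintype ι] [DecidableEq ι]
    [CommRing R] {P Q : Matrix ι ι R} {μ g ω : ι → R} {c : R}
    (hμ1 : ∑ i, μ i = 1) (hstat : μ ᵥ* Q = μ) (hpoisson : (1 - P) *ᵥ ω = fun i => g i - c) :
    μ ⬝ᵥ g - c = μ ⬝ᵥ ((Q - P) *ᵥ ω) := by
  have hconst : μ ⬝ᵥ (fun i => g i - c) = μ ⬝ᵥ g - c := by
    simp only [dotProduct, mul_sub, Finset.sum_sub_distrib, ← Finset.sum_mul, hμ1, one_mul]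
  rw [← hconst, ← hpoisson, sub_mulVec, sub_mulVec, one_mulVec, dotProduct_sub, dotProduct_sub,
    dotProduct_mulVec μ Q, hstat]

lemma sq_stationary_mean_sub_le {ι : Type*} [Fintype ι] [DecidableEq ι] {P Q : Matrix ι ι ℝ}
    {πP πQ g ω : ι → ℝ} (hπQ0 : ∀ i, 0 ≤ πQ i) (hπQ1 : ∑ i, πQ i = 1) (hstat : πQ ᵥ* Q = πQ)
    (hpoisson : (1 - P) *ᵥ ω = fun i => g i - πP ⬝ᵥ g) :
    (πQ ⬝ᵥ g - πP ⬝ᵥ g) ^ 2 ≤ ‖ω‖ ^ 2 * ∑ i, πQ i * (∑ j, |Q i j - P i j|) ^ 2 := by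
  rw [dotProduct_sub_eq_dotProduct_mulVec_of_poisson hπQ1 hstat hpoisson]
  set t : ι → ℝ := fun i => ∑ j, |Q i j - P i j|
  have hd (i : ι) : ((Q - P) *ᵥ ω) i ^ 2 ≤ (t i * ‖ω‖) ^ 2 := by
    rw [← sq_abs]
    exact pow_le_pow_left₀ (abs_nonneg _) (abs_dotProduct_le_sum_abs_mul_norm (Q i - P i) ω) 2
  have hcs := Finset.sum_sq_le_sum_mul_sum_of_sq_le_mul Finset.univ
    (r := fun i => πQ i * ((Q - P) *ᵥ ω) i) (f := πQ) (g := fun i => πQ i * (t i * ‖ω‖) ^ 2)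
    (fun i _ => hπQ0 i) (fun i _ => mul_nonneg (hπQ0 i) (sq_nonneg _))
    (fun i _ => by nlinarith [mul_le_mul_of_nonneg_left (hd i) (sq_nonneg (πQ i))])
  calc (πQ ⬝ᵥ ((Q - P) *ᵥ ω)) ^ 2 ≤ (∑ i, πQ i) * ∑ i, πQ i * (t i * ‖ω‖) ^ 2 := hcs
    _ = ‖ω‖ ^ 2 * ∑ i, πQ i * t i ^ 2 := by
      rw [hπQ1, one_mul, Finset.mul_sum]
      exact Finset.sum_congr rfl fun i _ => by ring

theorem stmt11_general (m : ℕ)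
    (P Q : Matrix (Fin m) (Fin m) ℝ)
    (hP0 : ∀ i j, 0 ≤ P i j) (hP1 : ∀ i, ∑ j, P i j = 1)
    (hQ0 : ∀ i j, 0 ≤ Q i j) (hQ1 : ∀ i, ∑ j, Q i j = 1)
    (πP πQ : Fin m → ℝ)
    (hπQ0 : ∀ i, 0 ≤ πQ i) (hπQ1 : ∑ i, πQ i = 1)
    (hQstat : ∀ j, ∑ i, πQ i * Q i j = πQ j)
    (g : Fin m → ℝ)
    (ω : Fin m → ℝ)
    (hpoisson : ((1 : Matrix (Fin m) (Fin m) ℝ) - P).mulVec ω =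
      fun i => g i - ∑ j, πP j * g j) :
    ENNReal.ofReal ((∑ i, πQ i * g i - ∑ i, πP i * g i) ^ 2 / (2 * ‖ω‖ ^ 2)) ≤
      ∑ i, ENNReal.ofReal (πQ i) * klDiv (Q i) (P i) := by
  set t : Fin m → ℝ := fun i => ∑ j, |Q i j - P i j|
  have hmean := sq_stationary_mean_sub_le hπQ0 hπQ1 (funext hQstat) hpoisson
  have hterm (i : Fin m) : 0 ≤ πQ i * (t i ^ 2 / 2) := mul_nonneg (hπQ0 i) (by positivity)
  calc ENNReal.ofReal ((πQ ⬝ᵥ g - πP ⬝ᵥ g) ^ 2 / (2 * ‖ω‖ ^ 2))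
      ≤ ENNReal.ofReal (∑ i, πQ i * (t i ^ 2 / 2)) := by
        refine ENNReal.ofReal_le_ofReal (div_le_of_le_mul₀ (by positivity)
          (Finset.sum_nonneg fun i _ => hterm i) ?_)
        calc _ ≤ ‖ω‖ ^ 2 * ∑ i, πQ i * t i ^ 2 := hmean
          _ = _ := by
            rw [Finset.sum_mul, Finset.mul_sum]
            exact Finset.sum_congr rfl fun i _ => by ring
    _ = ∑ i, ENNReal.ofReal (πQ i) * ENNReal.ofReal (t i ^ 2 / 2) := by
        rw [ENNReal.ofReal_sum_of_nonneg fun i _ => hterm i]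
        exact Finset.sum_congr rfl fun i _ => ENNReal.ofReal_mul (hπQ0 i)
    _ ≤ ∑ i, ENNReal.ofReal (πQ i) * klDiv (Q i) (P i) := by
        gcongr with i
        exact ofReal_sq_sum_abs_sub_div_two_le_klDiv (hP0 i) (hQ0 i) (hP1 i) (hQ1 i)

theorem stmt11 (m : ℕ) (hm : 0 < m)
    (P Q : Matrix (Fin m) (Fin m) ℝ)
    (hP0 : ∀ i j, 0 ≤ P i j) (hP1 : ∀ i, ∑ j, P i j = 1)
    (hQ0 : ∀ i j, 0 ≤ Q i j) (hQ1 : ∀ i, ∑ j, Q i j = 1)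
    (hPerg : ∃ n : ℕ, ∀ i j, 0 < (P ^ n) i j)
    (hQerg : ∃ n : ℕ, ∀ i j, 0 < (Q ^ n) i j)
    (πP πQ : Fin m → ℝ)
    (hπP0 : ∀ i, 0 ≤ πP i) (hπP1 : ∑ i, πP i = 1)
    (hπQ0 : ∀ i, 0 ≤ πQ i) (hπQ1 : ∑ i, πQ i = 1)
    (hPstat : ∀ j, ∑ i, πP i * P i j = πP j)
    (hQstat : ∀ j, ∑ i, πQ i * Q i j = πQ j)
    (g : Fin m → ℝ) (hg : ∃ i j, g i ≠ g j)
    (ω : Fin m → ℝ)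
    (hpoisson : ((1 : Matrix (Fin m) (Fin m) ℝ) - P).mulVec ω =
      fun i => g i - ∑ j, πP j * g j) :
    ENNReal.ofReal ((∑ i, πQ i * g i - ∑ i, πP i * g i) ^ 2 / (2 * ‖ω‖ ^ 2)) ≤
      ∑ i, ENNReal.ofReal (πQ i) * klDiv (Q i) (P i) :=
  stmt11_general m P Q hP0 hP1 hQ0 hQ1 πP πQ hπQ0 hπQ1 hQstat g ω hpoisson
end

section
/- Let P, Q be m×m ergodic transition matrices with stationary distributions π_P, π_Q, let g : [m] → ℝ, and let ω solve (I−P)ω = g − (π_P g)·𝟏. Then E_{π_Q}[g] − E_{π_P}[g] = ∑ᵢ π_Q(i)·( E_{Q(i,·)}[ω] − E_{P(i,·)}[ω] ), i.e., the gap of stationary means of g equals the π_Q-weighted sum of row-wise mean gaps of the Poisson solution ω. -/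
theorem stmt12 (m : ℕ) (hm : 0 < m)
    (P Q : Matrix (Fin m) (Fin m) ℝ)
    (hP0 : ∀ i j, 0 ≤ P i j) (hP1 : ∀ i, ∑ j, P i j = 1)
    (hQ0 : ∀ i j, 0 ≤ Q i j) (hQ1 : ∀ i, ∑ j, Q i j = 1)
    (hPerg : ∃ n : ℕ, ∀ i j, 0 < (P ^ n) i j)
    (hQerg : ∃ n : ℕ, ∀ i j, 0 < (Q ^ n) i j)
    (πP πQ : Fin m → ℝ)
    (hπP0 : ∀ i, 0 ≤ πP i) (hπP1 : ∑ i, πP i = 1)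
    (hπQ0 : ∀ i, 0 ≤ πQ i) (hπQ1 : ∑ i, πQ i = 1)
    (hPstat : ∀ j, ∑ i, πP i * P i j = πP j)
    (hQstat : ∀ j, ∑ i, πQ i * Q i j = πQ j)
    (g ω : Fin m → ℝ)
    (hpoisson : ((1 : Matrix (Fin m) (Fin m) ℝ) - P).mulVec ω =
      fun i => g i - ∑ j, πP j * g j) :
    ∑ i, πQ i * g i - ∑ i, πP i * g i =
      ∑ i, πQ i * ((∑ j, Q i j * ω j) - ∑ j, P i j * ω j) := by
  have hpe : ∀ i, ∑ j, P i j * ω j = ω i - (g i - ∑ j, πP j * g j) := by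
    intro i
    have := congrFun hpoisson i
    simp only [Matrix.mulVec, dotProduct, Matrix.sub_apply, Matrix.one_apply, sub_mul, ite_mul, one_mul,
      zero_mul, Finset.sum_sub_distrib, Finset.sum_ite_eq, Finset.mem_univ,
      if_true] at this
    linarith
  have hQω : ∑ i, πQ i * (∑ j, Q i j * ω j) = ∑ j, πQ j * ω j := by
    calc ∑ i, πQ i * (∑ j, Q i j * ω j)
        = ∑ j, (∑ i, πQ i * Q i j) * ω j := by
          simp only [Finset.mul_sum]
          rw [Finset.sum_comm]
          simp [Finset.sum_mul, mul_assoc]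
      _ = ∑ j, πQ j * ω j := by simp [hQstat]
  have key : ∑ i, πQ i * ((∑ j, Q i j * ω j) - ∑ j, P i j * ω j)
      = ∑ i, πQ i * (g i - ∑ j, πP j * g j) := by
    rw [show (∑ i, πQ i * ((∑ j, Q i j * ω j) - ∑ j, P i j * ω j))
        = (∑ i, πQ i * (∑ j, Q i j * ω j)) - ∑ i, πQ i * (∑ j, P i j * ω j) by
      rw [← Finset.sum_sub_distrib]; simp [mul_sub]]
    rw [hQω]
    simp only [hpe]
    rw [← Finset.sum_sub_distrib]
    congr 1
    ext i
    ring
  rw [key]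
  simp only [mul_sub, Finset.sum_sub_distrib, ← Finset.sum_mul, hπQ1, one_mul]
end

section
/- Berge minimum theorem: Let X, Y be topological spaces, φ : X × Y → ℝ a lower semicontinuous function, and Γ : X → 2^Y an upper semicontinuous correspondence with nonempty compact values. Then M(x) = min{φ(x,y) : y ∈ Γ(x)} is well-defined and lower semicontinuous on X. -/
/-- A lower semicontinuous function attains its minimum on a nonempty compact set. -/
lemma lsc_exists_min {Y : Type*} [TopologicalSpace Y] {K : Set Y} (hK : IsCompact K)
    (hne : K.Nonempty) {f : Y → ℝ} (hf : ∀ y ∈ K, LowerSemicontinuousAt f y) :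
    ∃ y ∈ K, ∀ z ∈ K, f y ≤ f z := by
  by_contra h
  push_neg at h
  -- For each y ∈ K, there is y' ∈ K with f y' < f y.
  choose g hgK hglt using h
  -- Cover K by open sets V_y = {z : f y' < f z}
  have hcov : ∀ y (hy : y ∈ K), ∃ U : Set Y, IsOpen U ∧ y ∈ U ∧ ∀ z ∈ U, f (g y hy) < f z := by
    intro y hy
    have := hf y hy (f (g y hy)) (hglt y hy)
    rcases eventually_nhds_iff.1 this with ⟨U, hU, hUo, hyU⟩
    exact ⟨U, hUo, hyU, hU⟩
  choose U hUo hyU hUlt using hcov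
  obtain ⟨t, hcover⟩ := hK.elim_nhds_subcover' (fun y hy => U y hy)
    (fun y hy => (hUo y hy).mem_nhds (hyU y hy))
  have htne : t.Nonempty := by
    rcases hne with ⟨y, hy⟩
    rcases Set.mem_iUnion₂.1 (hcover hy) with ⟨i, hi, _⟩
    exact ⟨i, hi⟩
  -- pick i ∈ t minimizing f (g i)
  obtain ⟨i, hit, hmin⟩ := t.exists_min_image (fun y : K => f (g y.1 y.2)) htne
  -- g i ∈ K, so it lies in some U j, so f (g j) < f (g i), contradiction
  have hgi : (g i.1 i.2) ∈ K := hgK _ _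
  rcases Set.mem_iUnion₂.1 (hcover hgi) with ⟨j, hj, hjU⟩
  have h1 : f (g j.1 j.2) < f (g i.1 i.2) := hUlt j.1 j.2 _ hjU
  exact absurd (hmin j hj) (not_le.2 h1)

theorem stmt17 {X Y : Type*} [TopologicalSpace X] [TopologicalSpace Y]
    (φ : X → Y → ℝ) (Γ : X → Set Y)
    (hφ : LowerSemicontinuous fun p : X × Y => φ p.1 p.2)
    (hne : ∀ x, (Γ x).Nonempty) (hcpt : ∀ x, IsCompact (Γ x))
    (husc : ∀ x₀, ∀ G : Set Y, IsOpen G → Γ x₀ ⊆ G →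
      ∀ᶠ x in nhds x₀, Γ x ⊆ G) :
    (∀ x, ∃ y ∈ Γ x, φ x y = sInf ((fun y => φ x y) '' Γ x) ∧
      ∀ y' ∈ Γ x, φ x y ≤ φ x y') ∧
    LowerSemicontinuous (fun x => sInf ((fun y => φ x y) '' Γ x)) := by
  -- φ x · is LSC at each point
  have hlsc : ∀ x : X, ∀ y ∈ Γ x, LowerSemicontinuousAt (fun z => φ x z) y := by
    intro x y _ c hc
    have := hφ (x, y) c hc
    exact (this.curry_nhds).self_of_nhds
  have hmin : ∀ x, ∃ y ∈ Γ x, ∀ z ∈ Γ x, φ x y ≤ φ x z := fun x =>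
    lsc_exists_min (hcpt x) (hne x) (hlsc x)
  have hM : ∀ x, ∃ y ∈ Γ x, φ x y = sInf ((fun y => φ x y) '' Γ x) ∧
      ∀ y' ∈ Γ x, φ x y ≤ φ x y' := by
    intro x
    obtain ⟨y, hy, hymin⟩ := hmin x
    refine ⟨y, hy, ?_, hymin⟩
    apply le_antisymm
    · exact le_csInf ((hne x).image _) (by rintro _ ⟨z, hz, rfl⟩; exact hymin z hz)
    · exact csInf_le ⟨φ x y, by rintro _ ⟨z, hz, rfl⟩; exact hymin z hz⟩ ⟨y, hy, rfl⟩
  refine ⟨hM, ?_⟩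
  intro x₀ c hc
  -- c < M x₀, so φ x₀ y > c for all y ∈ Γ x₀
  obtain ⟨y₀, hy₀, heq, hmin₀⟩ := hM x₀
  have hgt : ∀ y ∈ Γ x₀, c < φ x₀ y := fun y hy =>
    lt_of_lt_of_le (heq ▸ hc) (hmin₀ y hy)
  -- for each y ∈ Γ x₀, find open U_y × V_y where φ > c
  have hstep : ∀ y ∈ Γ x₀, ∃ (U : Set X) (V : Set Y), IsOpen U ∧ IsOpen V ∧
      x₀ ∈ U ∧ y ∈ V ∧ ∀ x ∈ U, ∀ z ∈ V, c < φ x z := by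
    intro y hy
    have := hφ (x₀, y) c (hgt y hy)
    rcases (nhds_prod_eq (x := x₀) (y := y) ▸ this).exists_mem with ⟨s, hs, hsub⟩
    rcases Filter.mem_prod_iff.1 hs with ⟨u, hu, v, hv, huv⟩
    rcases mem_nhds_iff.1 hu with ⟨U, hUu, hUo, hxU⟩
    rcases mem_nhds_iff.1 hv with ⟨V, hVv, hVo, hyV⟩
    exact ⟨U, V, hUo, hVo, hxU, hyV, fun x hx z hz =>
      hsub (x, z) (huv (Set.mk_mem_prod (hUu hx) (hVv hz)))⟩
  choose U V hUo hVo hxU hyV hlt using hstep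
  obtain ⟨t, hcover⟩ := (hcpt x₀).elim_nhds_subcover' (fun y hy => V y hy)
    (fun y hy => (hVo y hy).mem_nhds (hyV y hy))
  set G : Set Y := ⋃ y ∈ t, V y.1 y.2 with hG
  have hGo : IsOpen G := isOpen_biUnion fun y hy => hVo _ _
  have hΓG : Γ x₀ ⊆ G := hcover
  have hUall : (⋂ y ∈ t, U y.1 y.2) ∈ nhds x₀ := by
    refine (Filter.biInter_finset_mem t).2 fun y hy => (hUo _ _).mem_nhds (hxU _ _)
  filter_upwards [husc x₀ G hGo hΓG, hUall] with x hΓx hUx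
  -- M x > c
  obtain ⟨yx, hyx, heqx, _⟩ := hM x
  rw [← heqx]
  rcases Set.mem_iUnion₂.1 (hΓx hyx) with ⟨j, hj, hjV⟩
  exact hlt j.1 j.2 x (by simpa using Set.mem_iInter₂.1 hUx j hj) yx hjV
end
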